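/- arXiv:2406.03124 — 3 statements merged into one kernel-verified Lean document; each statement's English description precedes it below -/
import Mathlib

section
/- Let z_k ∈ ℂ^D for k = -M,…,M with k ≠ 0, and define for each j ≤ d the function z(t) = Σ_{k≠0, |k|≤M} e^{ikωt} Σ_{j=0}^d t^j z_{k,j}. Define coefficients y_{k,j} recursively by y_{k,d+1} = 0 and y_{k,j} = (1/(ikω))(z_{k,j} − (j+1) y_{k,j+1}) for j = d, d−1, …, 0. Then Y(t) := Σ_{k≠0,|k|≤M} e^{ikωt} Σ_{j=0}^d t^j y_{k,j} satisfies Y'(t) = z(t). -/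
/-!
A single mode `s ↦ exp (a s) • P(s)`, with `P` a vector polynomial, has derivative
`exp (a t) • (a • P + P')(t)`. For `a = i k ω ≠ 0` the recurrence says precisely that the
coefficients of `a • P + P'`, where `P` has coefficients `y_{k,j}`, are the `z_{k,j}`.
-/

open Finset

variable {E : Type*} [NormedAddCommGroup E] [NormedSpace ℂ E]

theorem hasDerivAt_sum_pow_smul (c : ℕ → E) (n : ℕ) (t : ℝ) :
    HasDerivAt (fun s : ℝ => ∑ j ∈ range (n + 1), (s : ℂ) ^ j • c j)
      (∑ j ∈ range n, (t : ℂ) ^ j • (((j : ℂ) + 1) • c (j + 1))) t := by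
  have h := HasDerivAt.fun_sum (u := range (n + 1)) fun j _ =>
    ((hasDerivAt_pow j (t : ℂ)).comp_ofReal).smul_const (c j)
  convert h using 1
  rw [sum_range_succ']
  simp only [Nat.cast_add, Nat.cast_one, Nat.add_sub_cancel, CharP.cast_eq_zero, zero_mul,
    zero_smul, add_zero, smul_smul]
  exact sum_congr rfl fun j _ => by ring_nf

theorem hasDerivAt_cexp_mul_ofReal (a : ℂ) (t : ℝ) :
    HasDerivAt (fun s : ℝ => Complex.exp (a * s)) (Complex.exp (a * t) * a) t := by
  simpa using ((hasDerivAt_id t).ofReal_comp.const_mul a).cexp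

theorem hasDerivAt_cexp_mul_smul_sum_pow_smul (a : ℂ) (y : ℕ → E) (d : ℕ)
    (hyd : y (d + 1) = 0) (t : ℝ) :
    HasDerivAt (fun s : ℝ => Complex.exp (a * s) • ∑ j ∈ range (d + 1), (s : ℂ) ^ j • y j)
      (Complex.exp (a * t) •
        ∑ j ∈ range (d + 1), (t : ℂ) ^ j • (a • y j + ((j : ℂ) + 1) • y (j + 1))) t := by
  convert (hasDerivAt_cexp_mul_ofReal a t).fun_smul (hasDerivAt_sum_pow_smul y d t) using 1
  have hsplit : ∑ j ∈ range (d + 1), (t : ℂ) ^ j • (a • y j + ((j : ℂ) + 1) • y (j + 1)) =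
      a • ∑ j ∈ range (d + 1), (t : ℂ) ^ j • y j +
        ∑ j ∈ range d, (t : ℂ) ^ j • (((j : ℂ) + 1) • y (j + 1)) := by
    have hlast : ∑ j ∈ range d, (t : ℂ) ^ j • (((j : ℂ) + 1) • y (j + 1)) =
        ∑ j ∈ range (d + 1), (t : ℂ) ^ j • (((j : ℂ) + 1) • y (j + 1)) := by
      rw [sum_range_succ, hyd, smul_zero, smul_zero, add_zero]
    rw [smul_sum, hlast, ← sum_add_distrib]
    exact sum_congr rfl fun j _ => by module
  rw [hsplit]
  module

/-- Exact antiderivative formula for the nonzero Fourier modes of a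
Taylor–Fourier function: with `y_{k,d+1} = 0` and
`y_{k,j} = (1/(ikω))(z_{k,j} − (j+1) y_{k,j+1})`, the function
`Y(t) = Σ_{k≠0,|k|≤M} e^{ikωt} Σ_{j≤d} t^j y_{k,j}` satisfies `Y' = z`. -/
theorem stmt_4 (D M d : ℕ) (ω : ℝ) (hω : 0 < ω)
    (z y : ℤ → ℕ → Fin D → ℂ)
    (hyd : ∀ k : ℤ, y k (d + 1) = 0)
    (hrec : ∀ k ∈ Finset.Icc (-(M : ℤ)) (M : ℤ), k ≠ 0 → ∀ j ≤ d,
        y k j = (Complex.I * (k : ℂ) * (ω : ℂ))⁻¹ •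
          (z k j - ((j : ℂ) + 1) • y k (j + 1)))
    (Z Y : ℝ → Fin D → ℂ)
    (hZ : ∀ t : ℝ, Z t = ∑ k ∈ (Finset.Icc (-(M : ℤ)) (M : ℤ)).erase 0,
        Complex.exp (Complex.I * (k : ℂ) * ((ω : ℂ) * (t : ℂ))) •
          ∑ j ∈ Finset.range (d + 1), (t : ℂ) ^ j • z k j)
    (hY : ∀ t : ℝ, Y t = ∑ k ∈ (Finset.Icc (-(M : ℤ)) (M : ℤ)).erase 0,
        Complex.exp (Complex.I * (k : ℂ) * ((ω : ℂ) * (t : ℂ))) •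
          ∑ j ∈ Finset.range (d + 1), (t : ℂ) ^ j • y k j) :
    ∀ t : ℝ, HasDerivAt Y (Z t) t := by
  intro t
  simp only [← mul_assoc] at hY hZ
  rw [funext hY, hZ t]
  refine HasDerivAt.fun_sum fun k hk => ?_
  obtain ⟨hk0, hkIcc⟩ := mem_erase.mp hk
  have ha : Complex.I * (k : ℂ) * (ω : ℂ) ≠ 0 := by simp [hk0, hω.ne']
  have hz : ∀ j ∈ range (d + 1),
      z k j = (Complex.I * (k : ℂ) * (ω : ℂ)) • y k j + ((j : ℂ) + 1) • y k (j + 1) := by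
    intro j hj
    rw [← sub_eq_iff_eq_add, eq_comm, ← eq_inv_smul_iff₀ ha]
    exact hrec k hkIcc hk0 j (Nat.lt_succ_iff.mp (mem_range.mp hj))
  rw [sum_congr rfl fun j hj => congrArg _ (hz j hj)]
  exact hasDerivAt_cexp_mul_smul_sum_pow_smul _ (y k) d (hyd k) t
end

section
/- The Picard-type iteration y^{[d+1]}(t) = y₀ + ε ∫₀^t z^{[d]}(τ) dτ, where z^{[d]} is the ε-expansion of f(ωτ, y^{[d]}(τ)) truncated at order ε^d, produces iterates satisfying y^{[d]}(t) = y(t;ε) + O(ε^{d+1}) uniformly on compact t-intervals, where y(t;ε) is the solution of y' = ε f(ωt, y), y(0) = y₀. -/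
open Filter Asymptotics Topology

open Filter Asymptotics Topology Set

variable {E : Type*} [NormedAddCommGroup E] [NormedSpace ℝ E]

lemma my_iteratedDeriv_add {f g : ℝ → E} (hf : ContDiff ℝ (⊤ : ℕ∞) f) (hg : ContDiff ℝ (⊤ : ℕ∞) g)
    (n : ℕ) (x : ℝ) :
    iteratedDeriv n (fun y => f y + g y) x = iteratedDeriv n f x + iteratedDeriv n g x := by
  simp only [iteratedDeriv]
  rw [iteratedFDeriv_add_apply' (hf.of_le (by exact_mod_cast le_top)).contDiffAt (hg.of_le (by exact_mod_cast le_top)).contDiffAt]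
  rfl

lemma my_iteratedDeriv_sub {f g : ℝ → E} (hf : ContDiff ℝ (⊤ : ℕ∞) f) (hg : ContDiff ℝ (⊤ : ℕ∞) g)
    (n : ℕ) (x : ℝ) :
    iteratedDeriv n (fun y => f y - g y) x = iteratedDeriv n f x - iteratedDeriv n g x := by
  have h1 : iteratedDeriv n (fun y => f y + (fun z => -g z) y) x
      = iteratedDeriv n f x + iteratedDeriv n (fun z => -g z) x :=
    my_iteratedDeriv_add hf hg.neg n x
  simp only [iteratedDeriv_neg] at h1
  simpa [sub_eq_add_neg] using h1

lemma my_iteratedDeriv_zero (n : ℕ) (x : ℝ) :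
    iteratedDeriv n (fun _ : ℝ => (0 : E)) x = 0 := by
  have : (fun _ : ℝ => (0 : E)) = fun y : ℝ => (0:E) + 0 := by funext; simp
  induction n generalizing x with
  | zero => simp
  | succ n ih =>
    rw [iteratedDeriv_succ']
    simp only [deriv_const']
    exact ih x

lemma my_iteratedDeriv_sum {ι : Type*} (s : Finset ι) (F : ι → ℝ → E)
    (hF : ∀ i ∈ s, ContDiff ℝ (⊤ : ℕ∞) (F i)) (n : ℕ) (x : ℝ) :
    iteratedDeriv n (fun y => ∑ i ∈ s, F i y) x = ∑ i ∈ s, iteratedDeriv n (F i) x := by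
  classical
  induction s using Finset.cons_induction with
  | empty => simpa using my_iteratedDeriv_zero (E := E) n x
  | cons a s' ha ih =>
    simp only [Finset.sum_cons]
    rw [my_iteratedDeriv_add (hF a (Finset.mem_cons_self a s'))
      (ContDiff.sum fun i hi => hF i (Finset.mem_cons_of_mem hi)),
      ih (fun i hi => hF i (Finset.mem_cons_of_mem hi))]

lemma my_iteratedDeriv_monomial (v : E) (m : ℕ) :
    ∀ l : ℕ, iteratedDeriv l (fun x : ℝ => x ^ m • v)
      = fun x : ℝ => (m.descFactorial l : ℝ) • x ^ (m - l) • v := by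
  intro l
  induction l with
  | zero => simp
  | succ l ih =>
    rw [iteratedDeriv_succ, ih]
    funext x
    have hd : HasDerivAt (fun x : ℝ => (m.descFactorial l : ℝ) • x ^ (m - l) • v)
        ((m.descFactorial l : ℝ) • (((m - l : ℕ) : ℝ) * x ^ (m - l - 1)) • v) x := by
      have h1 : HasDerivAt (fun x : ℝ => x ^ (m - l)) (((m - l : ℕ) : ℝ) * x ^ (m - l - 1)) x :=
        hasDerivAt_pow (m - l) x
      exact (h1.smul_const v).const_smul _
    rw [hd.deriv, Nat.descFactorial_succ, Nat.sub_sub]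
    push_cast
    rw [smul_smul, smul_smul]
    ring_nf

lemma my_contDiff_monomial (v : E) (m : ℕ) : ContDiff ℝ (⊤ : ℕ∞) (fun x : ℝ => x ^ m • v) :=
  (contDiff_id.pow m).smul contDiff_const

lemma my_taylor_bound (n : ℕ) :
    ∀ (h : ℝ → E), ContDiff ℝ (⊤ : ℕ∞) h → (∀ l < n, iteratedDeriv l h 0 = 0) →
    ∀ (M r : ℝ), (∀ s : ℝ, |s| ≤ r → ‖iteratedDeriv n h s‖ ≤ M) →
    ∀ ε : ℝ, |ε| ≤ r → ‖h ε‖ ≤ M * |ε| ^ n := by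
  induction n with
  | zero =>
    intro h _ _ M r hM ε hε
    simpa using hM ε hε
  | succ n ih =>
    intro h hh h0 M r hM ε hε
    have hM0 : 0 ≤ M := le_trans (norm_nonneg _) (hM 0 (by simpa using (abs_nonneg ε).trans hε))
    have hd : ContDiff ℝ (⊤ : ℕ∞) (deriv h) := (contDiff_infty_iff_deriv.mp hh).2
    have hder : ∀ s : ℝ, |s| ≤ r → ‖deriv h s‖ ≤ M * |s| ^ n := by
      refine ih (deriv h) hd (fun l hl => ?_) M r (fun s hs => ?_) 
      · rw [← iteratedDeriv_succ']; exact h0 (l + 1) (by omega)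
      · rw [← iteratedDeriv_succ']; exact hM s hs
    -- mean value on segment from 0 to ε
    have key : ‖h ε - h 0‖ ≤ (M * |ε| ^ n) * ‖ε - 0‖ := by
      have hconv : Convex ℝ (Set.uIcc (0:ℝ) ε) := convex_uIcc _ _
      have hbound : ∀ x ∈ Set.uIcc (0:ℝ) ε, ‖deriv h x‖ ≤ M * |ε| ^ n := by
        intro x hx
        have hxε : |x| ≤ |ε| := by
          rcases Set.mem_uIcc.mp hx with ⟨h1, h2⟩ | ⟨h1, h2⟩
          · rw [abs_of_nonneg h1, abs_of_nonneg (le_trans h1 h2)]; exact h2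
          · rw [abs_of_nonpos h2, abs_of_nonpos (h1.trans h2)]; exact neg_le_neg h1
        calc ‖deriv h x‖ ≤ M * |x| ^ n := hder x (hxε.trans hε)
          _ ≤ M * |ε| ^ n :=
            mul_le_mul_of_nonneg_left (pow_le_pow_left₀ (abs_nonneg x) hxε n) hM0
      exact hconv.norm_image_sub_le_of_norm_hasDerivWithin_le
        (fun x _ => ((hh.differentiable (by simp) x).hasDerivAt).hasDerivWithinAt)
        hbound Set.left_mem_uIcc Set.right_mem_uIcc
    have h00 : h 0 = 0 := by have := h0 0 (Nat.succ_pos n); simpa using this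
    calc ‖h ε‖ = ‖h ε - h 0‖ := by rw [h00, sub_zero]
      _ ≤ (M * |ε| ^ n) * ‖ε - 0‖ := key
      _ = M * |ε| ^ (n + 1) := by rw [sub_zero, Real.norm_eq_abs, pow_succ]; ring

lemma my_poly_coeff_zero :
    ∀ (n : ℕ) (w : ℕ → E),
      ((fun ε : ℝ => ∑ l ∈ Finset.range n, ε ^ l • w l) =O[𝓝[≠] (0:ℝ)] fun ε => ε ^ n) →
      ∀ l < n, w l = 0 := by
  intro n
  induction n with
  | zero => intro w _ l hl; omega
  | succ n ih =>
    intro w hw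
    have hcontsum : Continuous (fun ε : ℝ => ∑ l ∈ Finset.range (n+1), ε ^ l • w l) := by
      exact continuous_finset_sum _ fun l _ => (continuous_pow l).smul continuous_const
    have h0 : w 0 = 0 := by
      have h1 : Filter.Tendsto (fun ε : ℝ => ∑ l ∈ Finset.range (n+1), ε ^ l • w l)
          (𝓝[≠] (0:ℝ)) (𝓝 (w 0)) := by
        have := hcontsum.tendsto 0
        simp only [Finset.sum_range_succ'] at this ⊢
        have hval : ∑ i ∈ Finset.range n, (0:ℝ) ^ (i+1) • w (i+1) + (0:ℝ) ^ 0 • w 0 = w 0 := by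
          simp
        rw [hval] at this
        exact this.mono_left nhdsWithin_le_nhds
      have h2 : Filter.Tendsto (fun ε : ℝ => ∑ l ∈ Finset.range (n+1), ε ^ l • w l)
          (𝓝[≠] (0:ℝ)) (𝓝 0) := by
        refine hw.trans_tendsto ?_
        have : Filter.Tendsto (fun ε : ℝ => ε ^ (n+1)) (𝓝 (0:ℝ)) (𝓝 ((0:ℝ) ^ (n+1))) :=
          (continuous_pow (n+1)).tendsto 0
        rw [zero_pow (Nat.succ_ne_zero n)] at this
        exact this.mono_left nhdsWithin_le_nhds
      exact tendsto_nhds_unique h1 h2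
    have hw' : (fun ε : ℝ => ∑ l ∈ Finset.range n, ε ^ l • w (l+1))
        =O[𝓝[≠] (0:ℝ)] fun ε => ε ^ n := by
      obtain ⟨C, hC⟩ := hw.bound
      rw [Asymptotics.isBigO_iff]
      refine ⟨C, ?_⟩
      filter_upwards [hC, self_mem_nhdsWithin] with ε hε hεne
      have hrw : ∑ l ∈ Finset.range (n+1), ε ^ l • w l
          = ε • ∑ l ∈ Finset.range n, ε ^ l • w (l+1) := by
        rw [Finset.sum_range_succ', h0, Finset.smul_sum]
        simp only [smul_zero, add_zero]
        refine Finset.sum_congr rfl fun i _ => ?_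
        rw [pow_succ', mul_smul]
      rw [hrw] at hε
      rw [norm_smul, Real.norm_eq_abs] at hε
      have hεpos : (0:ℝ) < |ε| := abs_pos.mpr hεne
      have : |ε| * ‖∑ l ∈ Finset.range n, ε ^ l • w (l+1)‖ ≤ C * (|ε| * ‖ε ^ n‖) := by
        calc |ε| * ‖∑ l ∈ Finset.range n, ε ^ l • w (l+1)‖ ≤ C * ‖ε ^ (n+1)‖ := hε
          _ = C * (|ε| * ‖ε ^ n‖) := by
              rw [Real.norm_eq_abs, Real.norm_eq_abs, pow_succ, abs_mul]; ring
      exact le_of_mul_le_mul_left (by linarith [this] : |ε| * ‖∑ l ∈ Finset.range n, ε ^ l • w (l+1)‖ ≤ |ε| * (C * ‖ε ^ n‖)) hεpos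
    intro l hl
    rcases Nat.eq_zero_or_pos l with rfl | hlpos
    · exact h0
    · obtain ⟨l', rfl⟩ := Nat.exists_eq_succ_of_ne_zero (Nat.pos_iff_ne_zero.mp hlpos)
      exact ih (fun l => w (l+1)) hw' l' (by omega)

lemma my_bootstrap (g : ℝ → ℝ) (hg : Continuous g) (T : ℝ) (hg0 : g 0 ≤ 1/2)
    (key : ∀ t ∈ Icc (0:ℝ) T, (∀ s ∈ Icc (0:ℝ) t, g s ≤ 1) → g t ≤ 1/2) :
    ∀ t ∈ Icc (0:ℝ) T, g t ≤ 1/2 := by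
  by_cases hall : ∀ s ∈ Icc (0:ℝ) T, g s ≤ 1
  · intro t ht
    exact key t ht fun s hs => hall s ⟨hs.1, hs.2.trans ht.2⟩
  · exfalso
    push_neg at hall
    obtain ⟨t₁, ht₁, hgt₁⟩ := hall
    have hclosed : IsClosed (Icc (0:ℝ) T ∩ {t | 1 ≤ g t}) :=
      isClosed_Icc.inter (isClosed_le continuous_const hg)
    have hne : (Icc (0:ℝ) T ∩ {t | 1 ≤ g t}).Nonempty := ⟨t₁, ht₁, hgt₁.le⟩
    have hbdd : BddBelow (Icc (0:ℝ) T ∩ {t | 1 ≤ g t}) :=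
      (bddBelow_Icc).mono Set.inter_subset_left
    set c := sInf (Icc (0:ℝ) T ∩ {t | 1 ≤ g t}) with hcdef
    have hc : c ∈ Icc (0:ℝ) T ∩ {t | 1 ≤ g t} := hclosed.csInf_mem hne hbdd
    have hcpos : 0 < c := by
      rcases lt_or_eq_of_le hc.1.1 with h | h
      · exact h
      · exfalso; have := hc.2; rw [← h] at this; simp only [Set.mem_setOf_eq] at this; linarith
    have hlt : ∀ s ∈ Ico (0:ℝ) c, g s ≤ 1 := by
      intro s hs
      by_contra hcon
      push_neg at hcon
      have hsmem : s ∈ Icc (0:ℝ) T ∩ {t | 1 ≤ g t} :=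
        ⟨⟨hs.1, le_trans hs.2.le hc.1.2⟩, hcon.le⟩
      exact absurd (csInf_le hbdd hsmem) (not_le.mpr hs.2)
    have hgc_le : g c ≤ 1 := by
      have hcl : c ∈ closure (Ico (0:ℝ) c) := by
        rw [closure_Ico (ne_of_lt hcpos)]
        exact Set.right_mem_Icc.mpr hcpos.le
      have hsub : Ico (0:ℝ) c ⊆ {x | g x ≤ 1} := fun s hs => hlt s hs
      have := (isClosed_le hg continuous_const).closure_subset_iff.mpr hsub hcl
      exact this
    have happ : g c ≤ 1/2 := by
      refine key c hc.1 fun s hs => ?_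
      rcases lt_or_eq_of_le hs.2 with h | h
      · exact hlt s ⟨hs.1, h⟩
      · rw [h]; exact hgc_le
    have := hc.2
    simp only [Set.mem_setOf_eq] at this
    linarith

lemma my_periodic_bound {F : Type*} [NormedAddCommGroup F] (φ : ℝ × F → ℝ) (hφ : Continuous φ)
    (hp : ∀ (θ : ℝ) (y : F), φ (θ + 2 * Real.pi, y) = φ (θ, y)) {B : Set F} (hB : IsCompact B) :
    ∃ M : ℝ, ∀ (θ : ℝ), ∀ y ∈ B, φ (θ, y) ≤ M := by
  obtain ⟨M, hM⟩ := (isCompact_Icc (a := (0:ℝ)) (b := 2 * Real.pi)).prod hB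
    |>.exists_bound_of_continuousOn hφ.continuousOn
  refine ⟨M, fun θ y hy => ?_⟩
  have hper : Function.Periodic (fun θ => φ (θ, y)) (2 * Real.pi) := fun θ => hp θ y
  obtain ⟨θ₀, hθ₀, heq⟩ := hper.exists_mem_Ico₀ (by positivity) θ
  calc φ (θ, y) = φ (θ₀, y) := heq
    _ ≤ ‖φ (θ₀, y)‖ := le_abs_self _
    _ ≤ M := hM (θ₀, y) ⟨⟨hθ₀.1, hθ₀.2.le⟩, hy⟩

noncomputable def pdE (F : ℝ × ℝ → E) : ℝ × ℝ → E := fun p => fderiv ℝ F p ((1:ℝ), (0:ℝ))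

lemma my_inftop : (((⊤ : ℕ∞) : WithTop ℕ∞)) + 1 ≤ (((⊤ : ℕ∞) : WithTop ℕ∞)) := by
  norm_num

lemma pdE_contDiff {F : ℝ × ℝ → E} (hF : ContDiff ℝ (⊤ : ℕ∞) F) : ContDiff ℝ (⊤ : ℕ∞) (pdE F) :=
  (hF.fderiv_right my_inftop).clm_apply contDiff_const

lemma pdE_iter_contDiff {F : ℝ × ℝ → E} (hF : ContDiff ℝ (⊤ : ℕ∞) F) (l : ℕ) :
    ContDiff ℝ (⊤ : ℕ∞) (pdE^[l] F) := by
  induction l with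
  | zero => exact hF
  | succ l ih => rw [Function.iterate_succ_apply']; exact pdE_contDiff ih

lemma pdE_hasDerivAt {F : ℝ × ℝ → E} (hF : ContDiff ℝ (⊤ : ℕ∞) F) (τ ε : ℝ) :
    HasDerivAt (fun e => F (e, τ)) (pdE F (ε, τ)) ε :=
  ((hF.differentiable (by simp) (ε, τ)).hasFDerivAt).comp_hasDerivAt ε
    ((hasDerivAt_id ε).prodMk (hasDerivAt_const ε τ))

lemma pdE_slice {F : ℝ × ℝ → E} (hF : ContDiff ℝ (⊤ : ℕ∞) F) (l : ℕ) :
    ∀ (τ ε : ℝ), iteratedDeriv l (fun e => F (e, τ)) ε = pdE^[l] F (ε, τ) := by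
  induction l with
  | zero => intro τ ε; rfl
  | succ l ih =>
    intro τ ε
    rw [iteratedDeriv_succ]
    have hfun : iteratedDeriv l (fun e => F (e, τ)) = fun e => pdE^[l] F (e, τ) :=
      funext fun e => ih τ e
    rw [hfun]
    rw [Function.iterate_succ_apply']
    exact (pdE_hasDerivAt (pdE_iter_contDiff hF l) τ ε).deriv

lemma my_primitive_contDiff [CompleteSpace E] {u : ℝ → E} (hu : ContDiff ℝ (⊤ : ℕ∞) u) :
    ContDiff ℝ (⊤ : ℕ∞) (fun t : ℝ => ∫ τ in (0:ℝ)..t, u τ) := by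
  have hd : ∀ t : ℝ, HasDerivAt (fun t : ℝ => ∫ τ in (0:ℝ)..t, u τ) (u t) t := fun t =>
    (hu.continuous.integral_hasStrictDerivAt 0 t).hasDerivAt
  rw [contDiff_infty_iff_deriv]
  constructor
  · exact fun t => (hd t).differentiableAt
  · have : deriv (fun t : ℝ => ∫ τ in (0:ℝ)..t, u τ) = u := funext fun t => (hd t).deriv
    rw [this]; exact hu


set_option maxHeartbeats 1000000 in
/-- The Picard-type iteration
`y⁰(t) = y₀`, `y^{d+1}(t) = y₀ + ε ∫₀ᵗ z^d(τ) dτ`, where `z^d` is the `ε`-expansion of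
`f(ωτ, y^d(τ))` truncated at order `ε^d`, satisfies
`y^d(t) = y(t;ε) + O(ε^{d+1})` uniformly on compact `t`-intervals, where `y(·;ε)` solves
`y' = ε f(ωt, y)`, `y(0) = y₀`. -/
theorem stmt_11 (D : ℕ) (f : ℝ → (Fin D → ℝ) → (Fin D → ℝ))
    (hf : ContDiff ℝ (⊤ : ℕ∞) (Function.uncurry f))
    (hper : ∀ (θ : ℝ) (v : Fin D → ℝ), f (θ + 2 * Real.pi) v = f θ v)
    (ω : ℝ) (hω : 0 < ω) (y₀ : Fin D → ℝ)
    -- the iterates `yIter d ε t` and the truncated expansions `zIter d ε τ`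
    (yIter zIter : ℕ → ℝ → ℝ → (Fin D → ℝ))
    (hy0iter : ∀ (ε t : ℝ), yIter 0 ε t = y₀)
    -- `zIter d · τ` is a polynomial of degree at most `d` in `ε` …
    (hzpoly : ∀ d : ℕ, ∃ zc : ℕ → ℝ → (Fin D → ℝ), ∀ (ε τ : ℝ),
        zIter d ε τ = ∑ l ∈ Finset.range (d + 1), ε ^ l • zc l τ)
    -- … agreeing with the `ε`-expansion of `f(ωτ, y^d(τ))` up to order `ε^d`:
    (hztrunc : ∀ (d : ℕ) (τ : ℝ),
        (fun ε : ℝ => f (ω * τ) (yIter d ε τ) - zIter d ε τ)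
          =O[𝓝 0] fun ε : ℝ => ε ^ (d + 1))
    (hyrec : ∀ (d : ℕ) (ε t : ℝ),
        yIter (d + 1) ε t = y₀ + ε • ∫ τ in (0 : ℝ)..t, zIter d ε τ)
    -- the exact solution `ysol ε` of `y' = ε f(ωt, y)`, `y(0) = y₀`
    (ysol : ℝ → ℝ → (Fin D → ℝ))
    (hsol0 : ∀ ε : ℝ, ysol ε 0 = y₀)
    (hsol : ∀ (ε t : ℝ), HasDerivAt (ysol ε) (ε • f (ω * t) (ysol ε t)) t) :
    ∀ (d : ℕ) (T : ℝ), 0 < T → ∃ C > (0 : ℝ), ∃ ε₀ > (0 : ℝ),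
      ∀ ε : ℝ, |ε| ≤ ε₀ → ∀ t : ℝ, |t| ≤ T →
        ‖yIter d ε t - ysol ε t‖ ≤ C * |ε| ^ (d + 1) := by
  have hfE : ContDiff ℝ (⊤ : ℕ∞) (Function.uncurry f) := hf.of_le (by simp)
  have hfc : Continuous (Function.uncurry f) := hfE.continuous
  have hsolD : ∀ ε : ℝ, Differentiable ℝ (ysol ε) := fun ε t => (hsol ε t).differentiableAt
  have hsolC : ∀ ε : ℝ, Continuous (ysol ε) := fun ε => (hsolD ε).continuous
  have hfsolC : ∀ ε : ℝ, Continuous (fun τ : ℝ => f (ω * τ) (ysol ε τ)) := by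
    intro ε
    exact hfc.comp ((continuous_const.mul continuous_id).prodMk (hsolC ε))
  -- FTC for the exact solution
  have ftc : ∀ (ε t : ℝ), ysol ε t = y₀ + ε • ∫ τ in (0:ℝ)..t, f (ω * τ) (ysol ε τ) := by
    intro ε t
    have hint : IntervalIntegrable (fun τ : ℝ => ε • f (ω * τ) (ysol ε τ))
        MeasureTheory.volume 0 t := ((hfsolC ε).const_smul ε).intervalIntegrable 0 t
    have h1 := intervalIntegral.integral_eq_sub_of_hasDerivAt
      (f := ysol ε) (f' := fun τ => ε • f (ω * τ) (ysol ε τ)) (fun x _ => hsol ε x) hint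
    rw [hsol0 ε] at h1
    rw [intervalIntegral.integral_smul] at h1
    have h2 := h1.symm
    rw [sub_eq_iff_eq_add] at h2
    rw [h2]; abel
  -- |x| ≤ |t| for x in the interval of integration
  have huIoc : ∀ (t : ℝ), ∀ x ∈ Set.uIoc (0:ℝ) t, |x| ≤ |t| := by
    intro t x hx
    rcases Set.mem_uIoc.mp hx with ⟨h1, h2⟩ | ⟨h1, h2⟩
    · rw [abs_of_pos h1, abs_of_nonneg (h1.le.trans h2)]; exact h2
    · rw [abs_of_nonpos h2, abs_of_nonpos (le_of_lt (lt_of_lt_of_le h1 h2))]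
      linarith
  -- staying bound for the solution
  have solstay : ∀ T : ℝ, 0 < T → ∃ ε₁ > (0:ℝ), ∃ Mc > (0:ℝ),
      (∀ ε : ℝ, |ε| ≤ ε₁ → ∀ t : ℝ, |t| ≤ T → ‖ysol ε t - y₀‖ ≤ 1/2) ∧
      (∀ (θ : ℝ), ∀ y ∈ Metric.closedBall y₀ 1, ‖f θ y‖ ≤ Mc) ∧ ε₁ * (Mc * T) ≤ 1/2 := by
    intro T hT
    obtain ⟨M₀, hM₀⟩ := my_periodic_bound (fun p => ‖Function.uncurry f p‖) hfc.norm
      (by intro θ y; simp only [Function.uncurry]; rw [hper θ y])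
      (isCompact_closedBall y₀ 1)
    set Mc := max M₀ 0 + 1 with hMcdef
    have hMcpos : 0 < Mc := by positivity
    have hMcb : ∀ (θ : ℝ), ∀ y ∈ Metric.closedBall y₀ 1, ‖f θ y‖ ≤ Mc := by
      intro θ y hy
      exact (hM₀ θ y hy).trans (by simp only [hMcdef]; nlinarith [le_max_left M₀ (0:ℝ)])
    refine ⟨(2*Mc*T)⁻¹, by positivity, Mc, hMcpos, ?_, hMcb, ?_⟩
    swap
    · have heq : (2*Mc*T)⁻¹ * (Mc * T) = 1/2 := by field_simp
      linarith
    intro ε hε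
    have hεMT : |ε| * (Mc * T) ≤ 1/2 := by
      have h2 : (2*Mc*T)⁻¹ * (Mc * T) ≤ 1/2 := by
        have heq : (2*Mc*T)⁻¹ * (Mc * T) = 1/2 := by field_simp
        linarith
      have := mul_le_mul_of_nonneg_right hε (le_of_lt (by positivity : (0:ℝ) < Mc * T))
      linarith
    have forward : ∀ t ∈ Set.Icc (0:ℝ) T, ‖ysol ε t - y₀‖ ≤ 1/2 := by
      refine my_bootstrap _ (((hsolC ε).sub continuous_const).norm) T (by simp [hsol0]) ?_
      intro t ht hball
      have heq : ysol ε t - y₀ = ε • ∫ τ in (0:ℝ)..t, f (ω * τ) (ysol ε τ) := by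
        rw [ftc ε t]; abel
      change ‖ysol ε t - y₀‖ ≤ 1/2
      rw [heq, norm_smul, Real.norm_eq_abs]
      have hintb : ‖∫ τ in (0:ℝ)..t, f (ω * τ) (ysol ε τ)‖ ≤ Mc * |t - 0| := by
        refine intervalIntegral.norm_integral_le_of_norm_le_const ?_
        intro x hx
        rw [Set.uIoc_of_le ht.1] at hx
        refine hMcb _ _ ?_
        rw [Metric.mem_closedBall, dist_eq_norm]
        exact hball x ⟨hx.1.le, hx.2⟩
      calc |ε| * ‖∫ τ in (0:ℝ)..t, f (ω * τ) (ysol ε τ)‖ ≤ |ε| * (Mc * |t - 0|) :=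
            mul_le_mul_of_nonneg_left hintb (abs_nonneg ε)
        _ ≤ |ε| * (Mc * T) := by
            refine mul_le_mul_of_nonneg_left ?_ (abs_nonneg ε)
            refine mul_le_mul_of_nonneg_left ?_ hMcpos.le
            rw [sub_zero, abs_of_nonneg ht.1]; exact ht.2
        _ ≤ 1/2 := hεMT
    have backward : ∀ t ∈ Set.Icc (0:ℝ) T, ‖ysol ε (-t) - y₀‖ ≤ 1/2 := by
      refine my_bootstrap _ ((((hsolC ε).comp continuous_neg).sub continuous_const).norm) T
        (by simp [hsol0]) ?_
      intro t ht hball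
      show ‖ysol ε (-t) - y₀‖ ≤ 1/2
      have heq : ysol ε (-t) - y₀ = ε • ∫ τ in (0:ℝ)..(-t), f (ω * τ) (ysol ε τ) := by
        rw [ftc ε (-t)]; abel
      rw [heq, norm_smul, Real.norm_eq_abs]
      have hintb : ‖∫ τ in (0:ℝ)..(-t), f (ω * τ) (ysol ε τ)‖ ≤ Mc * |(-t) - 0| := by
        refine intervalIntegral.norm_integral_le_of_norm_le_const ?_
        intro x hx
        rw [Set.uIoc_comm, Set.uIoc_of_le (by linarith [ht.1] : -t ≤ 0)] at hx
        refine hMcb _ _ ?_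
        rw [Metric.mem_closedBall, dist_eq_norm]
        have := hball (-x) ⟨by linarith [hx.2], by linarith [hx.1]⟩
        simpa using this
      calc |ε| * ‖∫ τ in (0:ℝ)..(-t), f (ω * τ) (ysol ε τ)‖ ≤ |ε| * (Mc * |(-t) - 0|) :=
            mul_le_mul_of_nonneg_left hintb (abs_nonneg ε)
        _ ≤ |ε| * (Mc * T) := by
            refine mul_le_mul_of_nonneg_left ?_ (abs_nonneg ε)
            refine mul_le_mul_of_nonneg_left ?_ hMcpos.le
            rw [sub_zero, abs_neg, abs_of_nonneg ht.1]; exact ht.2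
        _ ≤ 1/2 := hεMT
    intro t hat
    rcases le_or_gt 0 t with h | h
    · exact forward t ⟨h, le_trans (le_abs_self t) hat⟩
    · have hat' : |(-t)| ≤ T := by rwa [abs_neg]
      have := backward (-t) ⟨by linarith, le_trans (le_abs_self (-t)) hat'⟩
      rwa [neg_neg] at this
  -- the main induction
  have main : ∀ d : ℕ,
      (∃ a : ℕ → ℝ → (Fin D → ℝ), (∀ k, ContDiff ℝ (⊤ : ℕ∞) (a k)) ∧
        ∀ ε t : ℝ, yIter d ε t = ∑ k ∈ Finset.range (d+1), ε ^ k • a k t) ∧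
      (∀ T : ℝ, 0 < T → ∃ C > (0:ℝ), ∃ ε₀ > (0:ℝ), ∀ ε : ℝ, |ε| ≤ ε₀ → ∀ t : ℝ, |t| ≤ T →
        ‖yIter d ε t - ysol ε t‖ ≤ C * |ε| ^ (d+1)) := by
    intro d
    induction d with
    | zero =>
      constructor
      · refine ⟨fun _ _ => y₀, fun k => contDiff_const, ?_⟩
        intro ε t; simp [hy0iter]
      · intro T hT
        obtain ⟨ε₁, hε₁, Mc, hMcpos, hstay, hMcb, _⟩ := solstay T hT
        refine ⟨Mc * T, by positivity, ε₁, hε₁, ?_⟩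
        intro ε hε t hat
        rw [hy0iter]
        have heq : y₀ - ysol ε t = -(ε • ∫ τ in (0:ℝ)..t, f (ω * τ) (ysol ε τ)) := by
          rw [ftc ε t]; abel
        rw [heq, norm_neg, norm_smul, Real.norm_eq_abs]
        have hintb : ‖∫ τ in (0:ℝ)..t, f (ω * τ) (ysol ε τ)‖ ≤ Mc * |t - 0| := by
          refine intervalIntegral.norm_integral_le_of_norm_le_const ?_
          intro x hx
          have hxT : |x| ≤ T := le_trans (huIoc t x hx) hat
          refine hMcb _ _ ?_
          rw [Metric.mem_closedBall, dist_eq_norm]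
          exact (hstay ε hε x hxT).trans (by norm_num)
        calc |ε| * ‖∫ τ in (0:ℝ)..t, f (ω * τ) (ysol ε τ)‖ ≤ |ε| * (Mc * |t - 0|) :=
              mul_le_mul_of_nonneg_left hintb (abs_nonneg ε)
          _ ≤ Mc * T * |ε| ^ (0+1) := by
              rw [sub_zero, pow_one]
              have h1 : Mc * |t| ≤ Mc * T := mul_le_mul_of_nonneg_left hat hMcpos.le
              nlinarith [abs_nonneg ε]
    | succ d ih =>
      obtain ⟨⟨a, haC, harep⟩, hQ⟩ := ih
      obtain ⟨zc, hzc⟩ := hzpoly d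
      set G : ℝ × ℝ → (Fin D → ℝ) :=
        fun p => f (ω * p.2) (∑ k ∈ Finset.range (d+1), p.1 ^ k • a k p.2) with hGdef
      have hGC : ContDiff ℝ (⊤ : ℕ∞) G := by
        have hinner : ContDiff ℝ (⊤ : ℕ∞) (fun p : ℝ × ℝ =>
            ((ω * p.2 : ℝ), (∑ k ∈ Finset.range (d+1), p.1 ^ k • a k p.2 : Fin D → ℝ))) :=
          (contDiff_const.mul contDiff_snd).prodMk
            (ContDiff.sum fun k _ => ((contDiff_fst.pow k).smul ((haC k).comp contDiff_snd)))
        exact hfE.comp hinner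
      have hGslice : ∀ ε τ : ℝ, f (ω * τ) (yIter d ε τ) = G (ε, τ) := by
        intro ε τ; rw [harep]
      set c : ℕ → ℝ → (Fin D → ℝ) :=
        fun l τ => ((l.factorial : ℝ))⁻¹ • pdE^[l] G (0, τ) with hcdef
      have hcC : ∀ l, ContDiff ℝ (⊤ : ℕ∞) (c l) := by
        intro l
        exact ((pdE_iter_contDiff hGC l).comp (contDiff_const.prodMk contDiff_id)).const_smul _
      have hGsliceC : ∀ τ : ℝ, ContDiff ℝ (⊤ : ℕ∞) (fun e : ℝ => G (e, τ)) :=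
        fun τ => hGC.comp (contDiff_id.prodMk contDiff_const)
      have hpolyC : ∀ τ : ℝ, ContDiff ℝ (⊤ : ℕ∞)
          (fun e : ℝ => ∑ l ∈ Finset.range (d+1), e ^ l • c l τ) :=
        fun τ => ContDiff.sum fun l _ => my_contDiff_monomial (c l τ) l
      have hiterlow : ∀ τ : ℝ, ∀ l < d + 1,
          iteratedDeriv l (fun e : ℝ => G (e, τ) - ∑ m ∈ Finset.range (d+1), e ^ m • c m τ) 0
            = 0 := by
        intro τ l hl
        rw [my_iteratedDeriv_sub (hGsliceC τ) (hpolyC τ) l 0]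
        rw [pdE_slice hGC l τ 0]
        rw [my_iteratedDeriv_sum (Finset.range (d+1)) (fun m => fun e : ℝ => e ^ m • c m τ)
          (fun m _ => my_contDiff_monomial _ m) l 0]
        have hsum : ∑ m ∈ Finset.range (d+1), iteratedDeriv l (fun e : ℝ => e ^ m • c m τ) 0
            = (l.factorial : ℝ) • c l τ := by
          rw [Finset.sum_eq_single l]
          · rw [my_iteratedDeriv_monomial]
            simp [Nat.descFactorial_self, Nat.sub_self]
          · intro m hm hne
            rw [my_iteratedDeriv_monomial]
            rcases lt_or_gt_of_ne hne with h | h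
            · simp only [Nat.descFactorial_eq_zero_iff_lt.mpr h, Nat.cast_zero, zero_smul]
            · simp only [zero_pow (Nat.sub_ne_zero_of_lt h), zero_smul, smul_zero]
          · intro h; exact absurd (Finset.mem_range.mpr hl) h
        rw [hsum]
        simp only [hcdef]
        rw [smul_smul, mul_inv_cancel₀ (by exact_mod_cast l.factorial_ne_zero), one_smul, sub_self]
      have hiterhigh : ∀ τ e : ℝ,
          iteratedDeriv (d+1) (fun e : ℝ => G (e, τ) - ∑ m ∈ Finset.range (d+1), e ^ m • c m τ) e
            = pdE^[d+1] G (e, τ) := by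
        intro τ e
        rw [my_iteratedDeriv_sub (hGsliceC τ) (hpolyC τ) (d+1) e, pdE_slice hGC (d+1) τ e,
          my_iteratedDeriv_sum (Finset.range (d+1)) (fun m => fun e : ℝ => e ^ m • c m τ)
            (fun m _ => my_contDiff_monomial _ m) (d+1) e]
        have hz : ∑ m ∈ Finset.range (d+1), iteratedDeriv (d+1) (fun e : ℝ => e ^ m • c m τ) e
            = 0 := by
          refine Finset.sum_eq_zero fun m hm => ?_
          rw [my_iteratedDeriv_monomial]
          simp only [Nat.descFactorial_eq_zero_iff_lt.mpr (Finset.mem_range.mp hm),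
            Nat.cast_zero, zero_smul]
        rw [hz, sub_zero]
      have taylor_est : ∀ (τ Mr : ℝ), (∀ e : ℝ, |e| ≤ 1 → ‖pdE^[d+1] G (e, τ)‖ ≤ Mr) →
          ∀ ε : ℝ, |ε| ≤ 1 →
          ‖G (ε, τ) - ∑ l ∈ Finset.range (d+1), ε ^ l • c l τ‖ ≤ Mr * |ε| ^ (d+1) := by
        intro τ Mr hMr ε hε
        refine my_taylor_bound (d+1) _ ((hGsliceC τ).sub (hpolyC τ)) (hiterlow τ) Mr 1 ?_ ε hε
        intro s hs
        rw [hiterhigh τ s]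
        exact hMr s hs
      have tay : ∀ τ : ℝ, (fun ε : ℝ => G (ε, τ) - ∑ l ∈ Finset.range (d+1), ε ^ l • c l τ)
          =O[𝓝 (0:ℝ)] fun ε => ε ^ (d+1) := by
        intro τ
        obtain ⟨Mτ, hMτ⟩ := (isCompact_Icc (a := (-1:ℝ)) (b := 1)).exists_bound_of_continuousOn
          (((pdE_iter_contDiff hGC (d+1)).continuous.comp
            (continuous_id.prodMk continuous_const)).continuousOn)
        rw [Asymptotics.isBigO_iff]
        refine ⟨Mτ, ?_⟩
        filter_upwards [Metric.closedBall_mem_nhds (0:ℝ) one_pos] with ε hε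
        have hε1 : |ε| ≤ 1 := by rwa [Metric.mem_closedBall, Real.dist_eq, sub_zero] at hε
        have hb := taylor_est τ Mτ (fun e he => hMτ e (abs_le.mp he)) ε hε1
        calc ‖G (ε, τ) - ∑ l ∈ Finset.range (d+1), ε ^ l • c l τ‖ ≤ Mτ * |ε| ^ (d+1) := hb
          _ = Mτ * ‖ε ^ (d+1)‖ := by rw [Real.norm_eq_abs, abs_pow]
      have zceq : ∀ τ : ℝ, ∀ l < d + 1, zc l τ = c l τ := by
        intro τ
        have h1 : (fun ε : ℝ => G (ε, τ) - zIter d ε τ) =O[𝓝 (0:ℝ)] fun ε => ε ^ (d+1) := by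
          have heq : (fun ε : ℝ => f (ω * τ) (yIter d ε τ) - zIter d ε τ)
              = fun ε : ℝ => G (ε, τ) - zIter d ε τ := funext fun ε => by rw [hGslice]
          rw [← heq]; exact hztrunc d τ
        have h2 := (tay τ).sub h1
        have heq2 : (fun ε : ℝ => (G (ε, τ) - ∑ l ∈ Finset.range (d+1), ε ^ l • c l τ)
              - (G (ε, τ) - zIter d ε τ))
            = fun ε : ℝ => ∑ l ∈ Finset.range (d+1), ε ^ l • (zc l τ - c l τ) := by
          funext ε
          rw [hzc ε τ]
          simp only [smul_sub]
          rw [Finset.sum_sub_distrib]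
          abel
        rw [heq2] at h2
        have h3 : (fun ε : ℝ => ∑ l ∈ Finset.range (d+1), ε ^ l • (zc l τ - c l τ))
            =O[𝓝[≠] (0:ℝ)] fun ε => ε ^ (d+1) := h2.mono nhdsWithin_le_nhds
        intro l hl
        have := my_poly_coeff_zero (d+1) (fun l => zc l τ - c l τ) h3 l hl
        exact sub_eq_zero.mp this
      have zfor : ∀ (ε τ : ℝ), zIter d ε τ = ∑ l ∈ Finset.range (d+1), ε ^ l • c l τ := by
        intro ε τ
        rw [hzc]
        exact Finset.sum_congr rfl fun l hl => by rw [zceq τ l (Finset.mem_range.mp hl)]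
      constructor
      · -- polynomial representation of the next iterate
        refine ⟨fun k t => if k = 0 then y₀ else ∫ τ in (0:ℝ)..t, c (k-1) τ, ?_, ?_⟩
        · intro k
          cases k with
          | zero => simpa using (contDiff_const : ContDiff ℝ (⊤:ℕ∞) fun _ : ℝ => y₀)
          | succ j =>
            have hfun : (fun t : ℝ => if j + 1 = 0 then y₀ else ∫ τ in (0:ℝ)..t, c (j+1-1) τ)
                = fun t : ℝ => ∫ τ in (0:ℝ)..t, c j τ := by
              funext t; simp
            show ContDiff ℝ (⊤:ℕ∞) (fun t : ℝ => if j + 1 = 0 then y₀ else ∫ τ in (0:ℝ)..t, c (j+1-1) τ)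
            rw [hfun]
            exact my_primitive_contDiff ((hcC j).of_le le_rfl)
        · intro ε t
          rw [hyrec d ε t]
          have hzint : (∫ τ in (0:ℝ)..t, zIter d ε τ)
              = ∑ l ∈ Finset.range (d+1), ε ^ l • ∫ τ in (0:ℝ)..t, c l τ := by
            have hfun : (fun τ => zIter d ε τ)
                = fun τ => ∑ l ∈ Finset.range (d+1), ε ^ l • c l τ := funext (zfor ε)
            rw [hfun, intervalIntegral.integral_finset_sum]
            · exact Finset.sum_congr rfl fun l _ => intervalIntegral.integral_smul _ _
            · intro l _
              exact (((hcC l).continuous.const_smul (ε ^ l)).intervalIntegrable 0 t)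
          rw [hzint, Finset.smul_sum]
          conv_rhs => rw [Finset.sum_range_succ']
          simp only [Nat.succ_ne_zero, reduceIte, pow_zero, one_smul, Nat.add_sub_cancel]
          rw [add_comm]
          congr 1
          refine Finset.sum_congr rfl fun i _ => ?_
          rw [smul_smul, ← pow_succ']
      · -- the quantitative estimate at level d+1
        intro T hT
        obtain ⟨C₂, hC₂, ε₂, hε₂, hQd⟩ := hQ T hT
        obtain ⟨ε₁, hε₁, Mc, hMcpos, hstay, hMcb, _⟩ := solstay T hT
        obtain ⟨Mu, hMu⟩ := ((isCompact_Icc (a := (-1:ℝ)) (b := 1)).prod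
          (isCompact_Icc (a := -T) (b := T))).exists_bound_of_continuousOn
          (pdE_iter_contDiff hGC (d+1)).continuous.continuousOn
        set C₁ := max Mu 0 with hC₁def
        have hC₁0 : 0 ≤ C₁ := le_max_right _ _
        have hutrunc : ∀ ε : ℝ, |ε| ≤ 1 → ∀ τ : ℝ, |τ| ≤ T →
            ‖f (ω * τ) (yIter d ε τ) - zIter d ε τ‖ ≤ C₁ * |ε| ^ (d+1) := by
          intro ε hε τ hτ
          rw [hGslice ε τ, zfor ε τ]
          refine taylor_est τ C₁ ?_ ε hε
          intro e he
          refine (hMu (e, τ) ?_).trans (le_max_left _ _)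
          refine Set.mem_prod.mpr ⟨?_, ?_⟩
          · exact ⟨(abs_le.mp he).1, (abs_le.mp he).2⟩
          · exact ⟨(abs_le.mp hτ).1, (abs_le.mp hτ).2⟩
        have hyb : ∃ ρ : ℝ, ∀ ε : ℝ, |ε| ≤ 1 → ∀ t : ℝ, |t| ≤ T → ‖yIter d ε t‖ ≤ ρ := by
          choose B hB using fun k => (isCompact_Icc (a := -T) (b := T)).exists_bound_of_continuousOn
            (haC k).continuous.continuousOn
          refine ⟨∑ k ∈ Finset.range (d+1), max (B k) 0, ?_⟩
          intro ε hε t hat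
          rw [harep]
          refine (norm_sum_le _ _).trans (Finset.sum_le_sum ?_)
          intro k _
          rw [norm_smul, norm_pow, Real.norm_eq_abs]
          calc |ε| ^ k * ‖a k t‖ ≤ 1 * max (B k) 0 := by
                refine mul_le_mul (pow_le_one₀ (abs_nonneg ε) hε) ?_ (norm_nonneg _) zero_le_one
                exact (hB k t ⟨(abs_le.mp hat).1, (abs_le.mp hat).2⟩).trans (le_max_left _ _)
            _ = max (B k) 0 := one_mul _
        obtain ⟨ρ, hρ⟩ := hyb
        set R := max ρ (‖y₀‖ + 1) with hRdef
        have hperF : ∀ p : ℝ × (Fin D → ℝ),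
            fderiv ℝ (Function.uncurry f) (p + ((2*Real.pi : ℝ), (0 : Fin D → ℝ)))
              = fderiv ℝ (Function.uncurry f) p := by
          intro p
          have htrans : (fun q : ℝ × (Fin D → ℝ) =>
              Function.uncurry f (q + ((2*Real.pi:ℝ), (0 : Fin D → ℝ)))) = Function.uncurry f := by
            funext q
            have hq : q + ((2*Real.pi:ℝ), (0 : Fin D → ℝ)) = (q.1 + 2*Real.pi, q.2) := by
              ext <;> simp
            rw [hq]
            exact hper q.1 q.2
          have h1 : HasFDerivAt (fun q : ℝ × (Fin D → ℝ) =>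
              Function.uncurry f (q + ((2*Real.pi:ℝ), (0 : Fin D → ℝ))))
              (fderiv ℝ (Function.uncurry f) (p + ((2*Real.pi:ℝ), (0 : Fin D → ℝ)))) p := by
            have hD := (hfE.differentiable (by simp)
              (p + ((2*Real.pi:ℝ), (0 : Fin D → ℝ)))).hasFDerivAt
            have hT' : HasFDerivAt (fun q : ℝ × (Fin D → ℝ) =>
                q + ((2*Real.pi:ℝ), (0 : Fin D → ℝ)))
                (ContinuousLinearMap.id ℝ (ℝ × (Fin D → ℝ))) p := (hasFDerivAt_id p).add_const _
            have hcomp := hD.comp p hT'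
            simpa using hcomp
          rw [htrans] at h1
          exact h1.fderiv.symm
        have hLip : ∃ L : ℝ, 0 ≤ L ∧ ∀ θ : ℝ, ∀ u ∈ Metric.closedBall (0 : Fin D → ℝ) R,
            ∀ v ∈ Metric.closedBall (0 : Fin D → ℝ) R, ‖f θ u - f θ v‖ ≤ L * ‖u - v‖ := by
          obtain ⟨L₀, hL₀⟩ := my_periodic_bound (fun p => ‖fderiv ℝ (Function.uncurry f) p‖)
            ((hfE.continuous_fderiv (by simp)).norm)
            (fun θ y => by
              have h := hperF (θ, y)
              rw [show ((θ,y) + ((2*Real.pi:ℝ), (0 : Fin D → ℝ))) = ((θ + 2*Real.pi : ℝ), y) from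
                by ext <;> simp] at h
              simp only [h])
            (isCompact_closedBall (0 : Fin D → ℝ) R)
          refine ⟨max L₀ 0, le_max_right _ _, ?_⟩
          intro θ u hu v hv
          have hder : ∀ y ∈ Metric.closedBall (0 : Fin D → ℝ) R,
              HasFDerivWithinAt (fun y => f θ y)
                ((fderiv ℝ (Function.uncurry f) (θ, y)).comp
                  ((0 : (Fin D → ℝ) →L[ℝ] ℝ).prod (ContinuousLinearMap.id ℝ (Fin D → ℝ))))
                (Metric.closedBall (0 : Fin D → ℝ) R) y := by
            intro y _
            have hD := (hfE.differentiable (by simp) (θ, y)).hasFDerivAt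
            have hpair : HasFDerivAt (fun y : Fin D → ℝ => ((θ : ℝ), y))
                ((0 : (Fin D → ℝ) →L[ℝ] ℝ).prod (ContinuousLinearMap.id ℝ (Fin D → ℝ))) y :=
              (hasFDerivAt_const θ y).prodMk (hasFDerivAt_id y)
            exact (hD.comp y hpair).hasFDerivWithinAt
          have hbound : ∀ y ∈ Metric.closedBall (0 : Fin D → ℝ) R,
              ‖(fderiv ℝ (Function.uncurry f) (θ, y)).comp
                  ((0 : (Fin D → ℝ) →L[ℝ] ℝ).prod (ContinuousLinearMap.id ℝ (Fin D → ℝ)))‖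
                ≤ max L₀ 0 := by
            intro y hy
            refine ContinuousLinearMap.opNorm_le_bound _ (le_max_right _ _) ?_
            intro z
            calc ‖(fderiv ℝ (Function.uncurry f) (θ, y)) (((0:ℝ), z) : ℝ × (Fin D → ℝ))‖
                ≤ ‖fderiv ℝ (Function.uncurry f) (θ, y)‖ * ‖(((0:ℝ), z) : ℝ × (Fin D → ℝ))‖ :=
                  ContinuousLinearMap.le_opNorm _ _
              _ ≤ max L₀ 0 * ‖z‖ := by
                  have hnz : ‖(((0:ℝ), z) : ℝ × (Fin D → ℝ))‖ = ‖z‖ := by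
                    rw [Prod.norm_def]
                    simp [max_eq_right (norm_nonneg z)]
                  rw [hnz]
                  exact mul_le_mul_of_nonneg_right ((hL₀ θ y hy).trans (le_max_left _ _))
                    (norm_nonneg z)
          exact (convex_closedBall (0 : Fin D → ℝ) R).norm_image_sub_le_of_norm_hasFDerivWithin_le
            hder hbound hv hu
        obtain ⟨L, hL0, hLip'⟩ := hLip
        have hCpos : (0:ℝ) < (C₁ + L * C₂) * T + 1 := by
          nlinarith [mul_nonneg (add_nonneg hC₁0 (mul_nonneg hL0 hC₂.le)) hT.le]
        refine ⟨(C₁ + L * C₂) * T + 1, hCpos, min 1 (min ε₁ ε₂), by positivity, ?_⟩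
        intro ε hε t hat
        have hε1 : |ε| ≤ 1 := le_trans hε (min_le_left _ _)
        have hεε₁ : |ε| ≤ ε₁ := le_trans hε (le_trans (min_le_right _ _) (min_le_left _ _))
        have hεε₂ : |ε| ≤ ε₂ := le_trans hε (le_trans (min_le_right _ _) (min_le_right _ _))
        have hz_int : IntervalIntegrable (fun τ => zIter d ε τ) MeasureTheory.volume 0 t := by
          have hfun : (fun τ => zIter d ε τ)
              = fun τ => ∑ l ∈ Finset.range (d+1), ε ^ l • c l τ := funext (zfor ε)
          rw [hfun]
          exact (continuous_finset_sum _ fun l _ =>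
            ((hcC l).continuous.const_smul (ε ^ l))).intervalIntegrable 0 t
        have hfs_int : IntervalIntegrable (fun τ => f (ω * τ) (ysol ε τ))
            MeasureTheory.volume 0 t := (hfsolC ε).intervalIntegrable 0 t
        have hid : yIter (d+1) ε t - ysol ε t
            = ε • ∫ τ in (0:ℝ)..t, (zIter d ε τ - f (ω * τ) (ysol ε τ)) := by
          rw [hyrec d ε t, ftc ε t, intervalIntegral.integral_sub hz_int hfs_int, smul_sub]
          abel
        rw [hid, norm_smul, Real.norm_eq_abs]
        have hintb : ‖∫ τ in (0:ℝ)..t, (zIter d ε τ - f (ω * τ) (ysol ε τ))‖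
            ≤ ((C₁ + L * C₂) * |ε| ^ (d+1)) * |t - 0| := by
          refine intervalIntegral.norm_integral_le_of_norm_le_const ?_
          intro x hx
          have hxT : |x| ≤ T := le_trans (huIoc t x hx) hat
          have h1 : ‖f (ω * x) (yIter d ε x) - zIter d ε x‖ ≤ C₁ * |ε| ^ (d+1) :=
            hutrunc ε hε1 x hxT
          have hyy : yIter d ε x ∈ Metric.closedBall (0 : Fin D → ℝ) R := by
            rw [Metric.mem_closedBall, dist_zero_right]
            exact (hρ ε hε1 x hxT).trans (le_max_left _ _)
          have hys : ysol ε x ∈ Metric.closedBall (0 : Fin D → ℝ) R := by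
            rw [Metric.mem_closedBall, dist_zero_right]
            have hst := hstay ε hεε₁ x hxT
            have h3 : ‖ysol ε x‖ ≤ ‖ysol ε x - y₀‖ + ‖y₀‖ := by
              calc ‖ysol ε x‖ = ‖(ysol ε x - y₀) + y₀‖ := by rw [sub_add_cancel]
                _ ≤ ‖ysol ε x - y₀‖ + ‖y₀‖ := norm_add_le _ _
            have h4 : ‖y₀‖ + 1 ≤ R := le_max_right _ _
            linarith
          have h2 : ‖f (ω * x) (yIter d ε x) - f (ω * x) (ysol ε x)‖
              ≤ L * (C₂ * |ε| ^ (d+1)) := by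
            refine (hLip' (ω * x) _ hyy _ hys).trans ?_
            exact mul_le_mul_of_nonneg_left (hQd ε hεε₂ x hxT) hL0
          calc ‖zIter d ε x - f (ω * x) (ysol ε x)‖
              ≤ ‖f (ω * x) (yIter d ε x) - zIter d ε x‖
                + ‖f (ω * x) (yIter d ε x) - f (ω * x) (ysol ε x)‖ := by
                have hre : zIter d ε x - f (ω * x) (ysol ε x)
                    = -(f (ω * x) (yIter d ε x) - zIter d ε x)
                      + (f (ω * x) (yIter d ε x) - f (ω * x) (ysol ε x)) := by abel
                rw [hre]
                exact (norm_add_le _ _).trans (by rw [norm_neg])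
            _ ≤ C₁ * |ε| ^ (d+1) + L * (C₂ * |ε| ^ (d+1)) := add_le_add h1 h2
            _ = (C₁ + L * C₂) * |ε| ^ (d+1) := by ring
        calc |ε| * ‖∫ τ in (0:ℝ)..t, (zIter d ε τ - f (ω * τ) (ysol ε τ))‖
            ≤ |ε| * (((C₁ + L * C₂) * |ε| ^ (d+1)) * |t - 0|) :=
              mul_le_mul_of_nonneg_left hintb (abs_nonneg ε)
          _ ≤ ((C₁ + L * C₂) * T + 1) * |ε| ^ (d+1+1) := by
              rw [sub_zero]
              have he1 : |ε| * (((C₁ + L * C₂) * |ε| ^ (d+1)) * |t|)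
                  = ((C₁ + L * C₂) * |t|) * |ε| ^ (d+2) := by ring
              rw [he1]
              refine mul_le_mul ?_ le_rfl (by positivity) (by nlinarith)
              nlinarith [abs_nonneg t, hat, hC₁0, hL0, hC₂.le]
  intro d T hT
  exact (main d).2 T hT
end

section
/- For q₀ = (x₀,y₀,z₀) ∈ ℝ³ with r₀ = ‖q₀‖ and x₀ ≥ 0 and r₀ + x₀ > 0, the vector u₀ ∈ ℝ⁴ defined by u₁ = u₄ = (1/2)√(r₀+x₀), u₂ = (y₀u₁ + z₀u₄)/(r₀+x₀), u₃ = (z₀u₁ − y₀u₄)/(r₀+x₀) satisfies L(u₀)u₀ = q₀. -/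
/-- For `q₀ = (x₀,y₀,z₀)` with `r₀ = ‖q₀‖`, `x₀ ≥ 0` and `r₀ + x₀ > 0`,
the vector `u₀` defined by `u₁ = u₄ = (1/2)√(r₀+x₀)`, `u₂ = (y₀u₁+z₀u₄)/(r₀+x₀)`,
`u₃ = (z₀u₁−y₀u₄)/(r₀+x₀)` satisfies `L(u₀)u₀ = q₀`, i.e. componentwise
`u₁²−u₂²−u₃²+u₄² = x₀`, `2(u₁u₂−u₃u₄) = y₀`, `2(u₁u₃+u₂u₄) = z₀`. -/
theorem stmt_13 (x₀ y₀ z₀ : ℝ)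
    (r₀ : ℝ) (hr₀ : r₀ = Real.sqrt (x₀ ^ 2 + y₀ ^ 2 + z₀ ^ 2))
    (hx₀ : 0 ≤ x₀) (hrx : 0 < r₀ + x₀)
    (u₁ u₂ u₃ u₄ : ℝ)
    (hu₁ : u₁ = Real.sqrt (r₀ + x₀) / 2)
    (hu₄ : u₄ = Real.sqrt (r₀ + x₀) / 2)
    (hu₂ : u₂ = (y₀ * u₁ + z₀ * u₄) / (r₀ + x₀))
    (hu₃ : u₃ = (z₀ * u₁ - y₀ * u₄) / (r₀ + x₀)) :
    u₁ ^ 2 - u₂ ^ 2 - u₃ ^ 2 + u₄ ^ 2 = x₀ ∧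
    2 * (u₁ * u₂ - u₃ * u₄) = y₀ ∧
    2 * (u₁ * u₃ + u₂ * u₄) = z₀ := by
  have hne : r₀ + x₀ ≠ 0 := ne_of_gt hrx
  have hr2 : r₀ ^ 2 = x₀ ^ 2 + y₀ ^ 2 + z₀ ^ 2 := by
    rw [hr₀]; exact Real.sq_sqrt (by positivity)
  have h1 : u₁ ^ 2 = (r₀ + x₀) / 4 := by
    rw [hu₁, div_pow, Real.sq_sqrt hrx.le]; norm_num
  have h41 : u₄ = u₁ := by rw [hu₁, hu₄]
  subst h41
  subst hu₂ hu₃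
  refine ⟨?_, ?_, ?_⟩ <;> field_simp
  · linear_combination (2*(r₀+x₀)^2 - 2*(y₀^2+z₀^2))*h1 + ((r₀+x₀)/2)*hr2
  · linear_combination 4*y₀*h1
  · linear_combination 4*z₀*h1
end
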